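/- arXiv:2202.00372 — 5 statements merged into one kernel-verified Lean document; each statement's English description precedes it below -/
import Mathlib

section
/- Suppose 𝔄 = {A_α : α < κ} is a refining shattering matrix: each A_α is a maximal almost disjoint family of infinite subsets of ω, for α < β every member of A_β is almost contained in some member of A_α, and ⋃𝔄 is a splitting family. Then for every α < κ, the tail union S_α = ⋃{A_β : α ≤ β < κ} is itself a splitting family. -/
open Set

/-- If `{A α : α < κ}` is a refining shattering matrix of maximal almost disjoint
families, then every tail union `⋃ {A β : α ≤ β}` is a splitting family. -/
theorem stmt3 {κ : Type*} [LinearOrder κ] (A : κ → Set (Set ℕ))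
    (hinf : ∀ α, ∀ a ∈ A α, a.Infinite)
    (had : ∀ α, ∀ a ∈ A α, ∀ a' ∈ A α, a ≠ a' → (a ∩ a').Finite)
    (hmad : ∀ α, ∀ b : Set ℕ, b.Infinite → ∃ a ∈ A α, (b ∩ a).Infinite)
    (href : ∀ α β, α < β → ∀ a ∈ A β, ∃ a' ∈ A α, (a \ a').Finite)
    (hshat : ∀ b : Set ℕ, b.Infinite → ∃ α, ∃ a ∈ A α, (b ∩ a).Infinite ∧ (b \ a).Infinite) :
    ∀ α, ∀ b : Set ℕ, b.Infinite →
      ∃ β, α ≤ β ∧ ∃ a ∈ A β, (b ∩ a).Infinite ∧ (b \ a).Infinite := by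
  intro α b hb
  obtain ⟨γ, a, ha, hba, hbna⟩ := hshat b hb
  rcases le_or_gt α γ with h | h
  · exact ⟨γ, h, a, ha, hba, hbna⟩
  · -- γ < α; apply MADness of A α to b ∩ a
    obtain ⟨a', ha', hba'⟩ := hmad α (b ∩ a) hba
    obtain ⟨a'', ha'', hfin⟩ := href γ α h a' ha'
    refine ⟨α, le_refl α, a', ha', ?_, ?_⟩
    · exact hba'.mono (by intro x hx; exact ⟨hx.1.1, hx.2⟩)
    · by_cases hc : a'' = a
      · subst hc
        -- a' ⊆* a'', so b \ a'' ⊆ (b \ a') ∪ (a' \ a'')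
        have hsub : b \ a'' ⊆ (b \ a') ∪ (a' \ a'') := by
          intro x hx
          by_cases hx' : x ∈ a'
          · exact Or.inr ⟨hx', hx.2⟩
          · exact Or.inl ⟨hx.1, hx'⟩
        have := hbna.mono hsub
        rcases (Set.infinite_union.mp this) with h1 | h2
        · exact h1
        · exact absurd h2 hfin.not_infinite
      · -- a ∩ a'' finite, a' ⊆* a'' ⇒ a ∩ a' finite, contradicting hba'
        have hfin2 : (a ∩ a'').Finite := had γ a ha a'' ha'' (fun he => hc he.symm)
        have hsub : b ∩ a ∩ a' ⊆ (a ∩ a'') ∪ (a' \ a'') := by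
          intro x hx
          by_cases hx' : x ∈ a''
          · exact Or.inl ⟨hx.1.2, hx'⟩
          · exact Or.inr ⟨hx.2, hx'⟩
        exact absurd (hba'.mono hsub) (hfin2.union hfin).not_infinite
end

section
/- If {x_α : α < λ} is a (κ,λ)-shattering family, then setting S_α = {x_β : β < λ} for each α < κ gives a sequence ⟨S_α : α < κ⟩ of splitting families such that no one-to-one selection ⟨s_α : α < κ⟩ with s_α ∈ S_α has an infinite pseudo-intersection. -/
open Set Cardinal

/-!
If `b` is infinite, fewer than `κ` of the `x β` almost contain `b` and fewer than `λ` are almost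
disjoint from it; since `κ < λ` and `λ` is infinite, some `x β` is neither, i.e. splits `b`.
A pseudo-intersection `b` of a one-to-one selection from the `S_α` would be almost contained
in `κ` distinct members of the family, contradicting the first shattering bound.
-/

theorem exists_inter_infinite_diff_infinite_of_mk_lt {ι : Type*} {X : Type*} {x : ι → Set X}
    {b : Set X} (hι : ℵ₀ ≤ #ι) (hdiff : #{α : ι | (b \ x α).Finite} < #ι)
    (hinter : #{α : ι | (b ∩ x α).Finite} < #ι) :
    ∃ β, (b ∩ x β).Infinite ∧ (b \ x β).Infinite := by
  obtain ⟨β, hβ⟩ := compl_nonempty_of_mk_lt_mk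
    ((mk_union_le _ _).trans_lt (add_lt_of_lt hι hdiff hinter))
  simp only [mem_compl_iff, mem_union, mem_ofPred_eq, not_or] at hβ
  exact ⟨β, hβ.2, hβ.1⟩

theorem mk_le_of_injective_of_forall_mem_image {ι J : Type u} {X : Type*} {x : ι → X}
    {s : J → X} {S : Set ι} (hs : Function.Injective s) (hsS : ∀ j, s j ∈ x '' S) :
    #J ≤ #S := by
  choose f hfS hf using hsS
  refine mk_le_of_injective (f := fun j => (⟨f j, hfS j⟩ : S)) fun j j' hjj' => hs ?_
  rw [← hf j, ← hf j', Subtype.mk.inj hjj']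

theorem stmt6_general {ι : Type u} {J : Type u}
    (hJω : ℵ₀ ≤ Cardinal.mk J) (hκ : Cardinal.mk J < Cardinal.mk ι)
    (x : ι → Set ℕ)
    (h1 : ∀ b : Set ℕ, b.Infinite → Cardinal.mk {α : ι | (b \ x α).Finite} < Cardinal.mk J)
    (h2 : ∀ b : Set ℕ, b.Infinite → Cardinal.mk {α : ι | (b ∩ x α).Finite} < Cardinal.mk ι) :
    (∀ b : Set ℕ, b.Infinite → ∃ β : ι, (b ∩ x β).Infinite ∧ (b \ x β).Infinite) ∧
    ∀ s : J → Set ℕ, (∀ j, ∃ β : ι, s j = x β) → Function.Injective s →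
      ¬ ∃ b : Set ℕ, b.Infinite ∧ ∀ j, (b \ s j).Finite := by
  refine ⟨fun b hb => exists_inter_infinite_diff_infinite_of_mk_lt (hJω.trans hκ.le)
    ((h1 b hb).trans hκ) (h2 b hb), ?_⟩
  rintro s hs hinj ⟨b, hb, hbs⟩
  have hsS : ∀ j, s j ∈ x '' {α : ι | (b \ x α).Finite} := fun j => by
    obtain ⟨β, hβ⟩ := hs j
    exact ⟨β, show (b \ x β).Finite from hβ ▸ hbs j, hβ.symm⟩
  exact (mk_le_of_injective_of_forall_mem_image hinj hsS).not_gt (h1 b hb)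

/-- A `(κ,λ)`-shattering family `{x α : α < λ}` yields, with `S_α = {x β : β < λ}` for
`α < κ`, a sequence of splitting families such that no one-to-one selection has an
infinite pseudo-intersection.  Here the cardinal `κ` is represented by the index type `J`. -/
theorem stmt6 {ι : Type u} {J : Type u}
    (hJω : ℵ₀ ≤ Cardinal.mk J) (hκ : Cardinal.mk J < Cardinal.mk ι)
    (x : ι → Set ℕ) (hinf : ∀ α, (x α).Infinite)
    (h1 : ∀ b : Set ℕ, b.Infinite → Cardinal.mk {α : ι | (b \ x α).Finite} < Cardinal.mk J)
    (h2 : ∀ b : Set ℕ, b.Infinite → Cardinal.mk {α : ι | (b ∩ x α).Finite} < Cardinal.mk ι) :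
    (∀ b : Set ℕ, b.Infinite → ∃ β : ι, (b ∩ x β).Infinite ∧ (b \ x β).Infinite) ∧
    ∀ s : J → Set ℕ, (∀ j, ∃ β : ι, s j = x β) → Function.Injective s →
      ¬ ∃ b : Set ℕ, b.Infinite ∧ ∀ j, (b \ s j).Finite :=
  stmt6_general hJω hκ x h1 h2
end

section
/- Let {κ_α : α < cf(𝔠)} be increasing and cofinal in 𝔠 = 2^{ℵ₀} and let {x_ξ : ξ < 𝔠} enumerate all infinite subsets of ω. For each α let S_α = {x_ξ : for all η < κ_α, x_η is not almost contained in x_ξ}. Then each S_α is a splitting family. -/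
/-!
Inside any infinite `b ⊆ ω` the branches of the binary tree, coded as sets of their finite
initial segments, give an almost disjoint family of `𝔠` infinite subsets. An infinite set is
almost contained in at most one member of such a family, so the fewer than `𝔠` sets `x η`,
`η < μ`, rule out fewer than `𝔠` members; any remaining member `a` splits `b`, since `b \ a`
contains almost all of every other member.
-/

open Set Cardinal

universe u v

def branchPrefixes (f : ℕ → Bool) : Set (List Bool) :=
  range fun n => List.ofFn fun i : Fin n => f i

theorem branchPrefixes_infinite (f : ℕ → Bool) : (branchPrefixes f).Infinite :=
  infinite_range_of_injective fun n m h => by simpa using congrArg List.length h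

theorem branchPrefixes_inter_finite {f g : ℕ → Bool} (h : f ≠ g) :
    (branchPrefixes f ∩ branchPrefixes g).Finite := by
  obtain ⟨k, hk⟩ := Function.ne_iff.mp h
  refine ((finite_Iic k).image fun n => List.ofFn fun i : Fin n => f i).subset ?_
  rintro _ ⟨⟨n, rfl⟩, ⟨m, hm⟩⟩
  obtain rfl : m = n := by simpa using congrArg List.length hm
  refine ⟨m, mem_Iic.mpr (not_lt.mp fun hkm => hk ?_), rfl⟩
  exact (congrFun (List.ofFn_injective hm) ⟨k, hkm⟩).symm

theorem Set.Infinite.exists_almostDisjoint_family {α : Type*} {s : Set α} (hs : s.Infinite) :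
    ∃ A : (ℕ → Bool) → Set α, (∀ f, A f ⊆ s) ∧ (∀ f, (A f).Infinite) ∧
      Pairwise fun f g => (A f ∩ A g).Finite := by
  set e : List Bool → α := fun l => hs.natEmbedding _ (Encodable.encode l)
  have he : Function.Injective e := fun l l' h =>
    Encodable.encode_injective ((hs.natEmbedding _).injective (Subtype.ext h))
  refine ⟨fun f => e '' branchPrefixes f, ?_, fun f => (branchPrefixes_infinite f).image he.injOn,
    fun f g hfg => ?_⟩
  · rintro f _ ⟨l, -, rfl⟩
    exact (hs.natEmbedding _ _).2
  · dsimp only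
    rw [← image_inter he]
    exact (branchPrefixes_inter_finite hfg).image e

theorem Set.Infinite.inter_infinite_of_diff_finite {α : Type*} {y a a' : Set α}
    (hy : y.Infinite) (ha : (y \ a).Finite) (ha' : (y \ a').Finite) : (a ∩ a').Infinite := by
  intro h
  refine hy (((ha.union ha').union h).subset fun n hn => ?_)
  by_cases hna : n ∈ a <;> by_cases hna' : n ∈ a' <;> simp [*]

theorem infinite_diff_of_pairwise_inter_finite {α ι : Type*} [Nontrivial ι] {s : Set α}
    {A : ι → Set α} (hAs : ∀ i, A i ⊆ s) (hA : ∀ i, (A i).Infinite)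
    (hAd : Pairwise fun i j => (A i ∩ A j).Finite) (i : ι) : (s \ A i).Infinite := by
  obtain ⟨j, hji⟩ := exists_ne i
  refine ((hA j).sdiff (hAd hji)).mono ?_
  rw [sdiff_self_inter]
  exact sdiff_subset_sdiff_left (hAs j)

theorem exists_forall_not_diff_finite {α : Type*} {ι : Type u} {κ : Type v} {A : ι → Set α}
    (hA : Pairwise fun i j => (A i ∩ A j).Finite) {Y : κ → Set α} (hY : ∀ k, (Y k).Infinite)
    (hcard : lift.{u} #κ < lift.{v} #ι) : ∃ i, ∀ k, ¬ (Y k \ A i).Finite := by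
  by_contra! hbad
  choose c hc using hbad
  have hinj : Function.Injective c := fun i j hij => by
    by_contra hne
    exact (hY (c j)).inter_infinite_of_diff_finite (hij ▸ hc i) (hc j) (hA hne)
  exact hcard.not_ge (lift_mk_le_lift_mk_of_injective hinj)

theorem mk_nat_to_bool : #(ℕ → Bool) = 𝔠 := by
  rw [← power_def, mk_bool, mk_nat, two_power_aleph0]

theorem mk_subtype_val_lt_lt_continuum {ν μ : Ordinal.{u}} (hμ : μ < continuum.ord) :
    #{η : {o : Ordinal.{u} // o < ν} // η.1 < μ} < 𝔠 :=
  calc #{η : {o : Ordinal.{u} // o < ν} // η.1 < μ}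
      ≤ #(Iio μ) := mk_le_of_injective (f := fun η => ⟨η.1.1, η.2⟩) fun η η' h => by
        simpa [Subtype.ext_iff] using h
    _ = lift.{u + 1} μ.card := mk_Iio_ordinal μ
    _ < 𝔠 := by rw [← lift_continuum.{u + 1, u}, lift_lt]; exact lt_ord.mp hμ

/-- Let `x` enumerate (bijectively) all infinite subsets of `ω` along the ordinals
below `𝔠`.  For each ordinal `μ < 𝔠`, the family
`S_μ = {x ξ : ∀ η < μ, ¬ (x η ⊆* x ξ)}` is a splitting family. -/
theorem stmt8
    (x : {o : Ordinal.{0} // o < Cardinal.continuum.ord} → {s : Set ℕ // s.Infinite})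
    (hx : Function.Bijective x)
    (μ : Ordinal.{0}) (hμ : μ < Cardinal.continuum.ord) :
    ∀ b : Set ℕ, b.Infinite →
      ∃ ξ : {o : Ordinal.{0} // o < Cardinal.continuum.ord},
        (∀ η : {o : Ordinal.{0} // o < Cardinal.continuum.ord},
          η.1 < μ → ¬ ((x η).1 \ (x ξ).1).Finite) ∧
        (b ∩ (x ξ).1).Infinite ∧ (b \ (x ξ).1).Infinite := by
  intro b hb
  obtain ⟨A, hAb, hAinf, hAad⟩ := hb.exists_almostDisjoint_family
  have hcard : lift.{0} #{η : {o : Ordinal.{0} // o < continuum.ord} // η.1 < μ} <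
      lift.{1} #(ℕ → Bool) := by
    rw [lift_uzero, mk_nat_to_bool, lift_continuum]
    exact mk_subtype_val_lt_lt_continuum hμ
  obtain ⟨f, hf⟩ := exists_forall_not_diff_finite hAad (fun η => (x η.1).2) hcard
  obtain ⟨ξ, hξ⟩ := hx.surjective ⟨A f, hAinf f⟩
  have hxξ : (x ξ).1 = A f := by rw [hξ]
  refine ⟨ξ, fun η hη => hxξ ▸ hf ⟨η, hη⟩, ?_, ?_⟩
  · rw [hxξ, inter_eq_right.mpr (hAb f)]
    exact hAinf f
  · rw [hxξ]
    exact infinite_diff_of_pairwise_inter_finite hAb hAinf hAad f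
end

section
/- Let {P_α : α ≤ δ} be a ⊆-increasing chain of ccc posets with P_α a complete suborder of P_δ for all α < δ and P_δ = ⋃_{α<δ} P_α. If f ∈ ω^ω is not dominated by any g in the extension by P_α for every α < δ, then f is not dominated by any g in the extension by P_δ. That is: for every canonical P_δ-name ġ for an element of ω^ω and every p ∈ P_δ and k ∈ ω, there are n > k and q ≤ p with q forcing ġ(n) < f(n). -/
variable {R : Type*} [Preorder R]

/-- `a` and `b` have a common lower bound inside `S`. -/
def Compat (S : Set R) (a b : R) : Prop := ∃ c ∈ S, c ≤ a ∧ c ≤ b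

/-- `D` is predense in the suborder `S`. -/
def PredenseIn (S D : Set R) : Prop := ∀ q ∈ S, ∃ d ∈ D, Compat S d q

/-- `S` is a complete suborder of `T`: compatibility and predensity transfer. -/
def CompleteSub (S T : Set R) : Prop :=
  S ⊆ T ∧
  (∀ a ∈ S, ∀ b ∈ S, Compat T a b → Compat S a b) ∧
  (∀ D ⊆ S, PredenseIn S D → PredenseIn T D)

/-- `S` is ccc: every antichain of `S` is countable. -/
def Ccc (S : Set R) : Prop :=
  ∀ C ⊆ S, (C.Pairwise fun a b => ¬ Compat S a b) → C.Countable

/-- A canonical `S`-name for an element of `ω^ω`: `A n m` is the antichain of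
conditions forcing `ġ(n) = m`, and `⋃ m, A n m` is predense in `S`. -/
def CanName (S : Set R) (A : ℕ → ℕ → Set R) : Prop :=
  (∀ n m, A n m ⊆ S) ∧
  (∀ n, ∀ m m', m ≠ m' → ∀ a ∈ A n m, ∀ b ∈ A n m', ¬ Compat S a b) ∧
  (∀ n, PredenseIn S (⋃ m, A n m))

/-- `f` is not dominated by any real of the forcing extension by `S`: for every
canonical `S`-name `ġ`, every `p ∈ S` and every `k` there are `n > k`, `m < f n`
and a condition compatible with `p` forcing `ġ(n) = m`. -/
def UnbddOver (S : Set R) (f : ℕ → ℕ) : Prop :=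
  ∀ A : ℕ → ℕ → Set R, CanName S A →
    ∀ p ∈ S, ∀ k : ℕ, ∃ n > k, ∃ m < f n, ∃ r ∈ A n m, Compat S r p

/-- Preservation of unboundedness at limits of `<·`-increasing chains of ccc posets:
if `f` is unbounded over each extension by `P α`, it is unbounded over the
extension by `P_δ = ⋃ α, P α`. -/
theorem stmt11 {ι : Type*} [LinearOrder ι] (P : ι → Set R)
    (hmono : ∀ α β : ι, α ≤ β → P α ⊆ P β)
    (hccc : ∀ α, Ccc (P α))
    (hcomp : ∀ α, CompleteSub (P α) (⋃ β, P β))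
    (f : ℕ → ℕ)
    (hf : ∀ α, UnbddOver (P α) f) :
    UnbddOver (⋃ β, P β) f := by
  classical
  intro A hA p hp k
  rw [Set.mem_iUnion] at hp
  obtain ⟨α, hpα⟩ := hp
  obtain ⟨hPsub, hcompat, hpredT⟩ := hcomp α
  obtain ⟨hAsub, hAanti, hApred⟩ := hA
  -- reducts below a condition t ∈ P α exist for any c ∈ ⋃P with c ≤ t
  have reduct : ∀ t ∈ P α, ∀ c ∈ (⋃ β, P β), c ≤ t →
      ∃ s ∈ P α, s ≤ t ∧ ∀ s' ∈ P α, s' ≤ s → Compat (⋃ β, P β) s' c := by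
    intro t ht c hc hct
    by_contra hcon
    push_neg at hcon
    set D : Set R :=
      {s' | s' ∈ P α ∧ (¬ Compat (⋃ β, P β) s' c ∨ ¬ Compat (P α) s' t)} with hD
    have hDsub : D ⊆ P α := fun x hx => hx.1
    have hDpred : PredenseIn (P α) D := by
      intro u hu
      by_cases h : Compat (P α) u t
      · obtain ⟨v, hv, hvu, hvt⟩ := h
        obtain ⟨v', hv', hv'v, hnc⟩ := hcon v hv hvt
        exact ⟨v', ⟨hv', Or.inl hnc⟩, v', hv', le_refl v', hv'v.trans hvu⟩
      · exact ⟨u, ⟨hu, Or.inr h⟩, u, hu, le_refl u, le_refl u⟩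
    obtain ⟨d, hd, e, he, hed, hec⟩ := hpredT D hDsub hDpred c hc
    rcases hd.2 with h1 | h2
    · exact h1 ⟨e, he, hed, hec⟩
    · exact h2 (hcompat d hd.1 t ht ⟨e, he, hed, hec.trans hct⟩)
  -- the induced canonical name over P α
  set B : ℕ → ℕ → Set R := fun n m =>
    {s | s ∈ P α ∧ (∃ r ∈ A n m, ∀ s' ∈ P α, s' ≤ s → Compat (⋃ β, P β) s' r) ∧
      ∀ m' < m, ∀ r' ∈ A n m', ¬ Compat (⋃ β, P β) s r'} with hBdef
  have hB : CanName (P α) B := by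
    refine ⟨fun n m s hs => hs.1, ?_, ?_⟩
    · intro n
      have key : ∀ m m', m < m' → ∀ a ∈ B n m, ∀ b ∈ B n m', ¬ Compat (P α) a b := by
        rintro m m' hlt a ha b hb ⟨u, hu, hua, hub⟩
        obtain ⟨r, hr, hred⟩ := ha.2.1
        obtain ⟨e, he, heu, her⟩ := hred u hu hua
        exact hb.2.2 m hlt r hr ⟨e, he, heu.trans hub, her⟩
      intro m m' hne a ha b hb hab
      rcases hne.lt_or_gt with h' | h'
      · exact key m m' h' a ha b hb hab
      · obtain ⟨u, hu, h1, h2⟩ := hab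
        exact key m' m h' b hb a ha ⟨u, hu, h2, h1⟩
    · intro n t ht
      have htT : t ∈ ⋃ β, P β := hPsub ht
      have hM : ∃ m, ∃ r ∈ A n m, Compat (⋃ β, P β) r t := by
        obtain ⟨d, hd, hc⟩ := hApred n t htT
        rw [Set.mem_iUnion] at hd
        obtain ⟨m, hm⟩ := hd
        exact ⟨m, d, hm, hc⟩
      obtain ⟨r, hr, c, hc, hcr, hct⟩ := Nat.find_spec hM
      obtain ⟨s, hs, hst, hsred⟩ := reduct t ht c hc hct
      refine ⟨s, ?_, s, hs, le_refl s, hst⟩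
      rw [Set.mem_iUnion]
      refine ⟨Nat.find hM, hs, ⟨r, hr, fun s' hs' hss' => ?_⟩, ?_⟩
      · obtain ⟨e, he, hes, hec⟩ := hsred s' hs' hss'
        exact ⟨e, he, hes, hec.trans hcr⟩
      · rintro m' hm' r' hr' ⟨e, he, hes, her'⟩
        exact Nat.find_min hM hm' ⟨r', hr', e, he, her', hes.trans hst⟩
  obtain ⟨n, hn, m, hm, s, hsB, u, hu, hus, hup⟩ := hf α B hB p hpα k
  obtain ⟨r, hr, hred⟩ := hsB.2.1
  obtain ⟨e, he, heu, her⟩ := hred u hu hus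
  exact ⟨n, hn, m, hm, r, hr, e, he, her, heu.trans hup⟩
end

section
/- Suppose ⟨S_α : α < κ⟩ is a sequence of splitting families on ω such that no injective selection ⟨s_α : α < κ⟩ ∈ Π_α S_α has an infinite pseudo-intersection. Then for every infinite b ⊆ ω, every α < κ, and every S' ⊆ [ω]^ω with |S'| < κ such that the family {{s' ∩ b, b \ s'} : s' ∈ S'} is not shattering on b, there exist an infinite a ⊆ b and s ∈ S_α \ S' with a ⊆ s and s splitting b. -/
open Set Cardinal

/-- Suppose `⟨S α : α < κ⟩` is a sequence of splitting families such that no injective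
selection has an infinite pseudo-intersection.  Then for every infinite `b`, every
`α`, and every family `S'` of infinite sets with `|S'| < κ` such that some infinite
`b' ⊆ b` is unsplit by `S'` (i.e. `{{s' ∩ b, b \ s'} : s' ∈ S'}` is not shattering
on `b`), there are an infinite `a ⊆ b` and `s ∈ S α \ S'` with `a ⊆ s` and `s`
splitting `b`. -/
theorem stmt18 {ι : Type} [LinearOrder ι] (S : ι → Set (Set ℕ))
    (hsplit : ∀ α, ∀ b : Set ℕ, b.Infinite →
      ∃ s ∈ S α, (b ∩ s).Infinite ∧ (b \ s).Infinite)
    (hnopi : ∀ s : ι → Set ℕ, (∀ α, s α ∈ S α) → Function.Injective s →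
      ¬ ∃ b : Set ℕ, b.Infinite ∧ ∀ α, (b \ s α).Finite) :
    ∀ b : Set ℕ, b.Infinite → ∀ α : ι, ∀ S' : Set (Set ℕ),
      (∀ s' ∈ S', s'.Infinite) → Cardinal.mk S' < Cardinal.mk ι →
      (∃ b' ⊆ b, b'.Infinite ∧ ∀ s' ∈ S',
        ¬ ((b' ∩ s').Infinite ∧ (b' \ s').Infinite)) →
      ∃ a ⊆ b, a.Infinite ∧ ∃ s ∈ S α, s ∉ S' ∧ a ⊆ s ∧
        (b ∩ s).Infinite ∧ (b \ s).Infinite := by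
  intro b hb α S' _ _ ⟨b', hb'b, hb'inf, hunsplit⟩
  obtain ⟨s, hsS, hi, hd⟩ := hsplit α b' hb'inf
  refine ⟨b' ∩ s, fun x hx => hb'b hx.1, hi, s, hsS, ?_, fun x hx => hx.2, ?_, ?_⟩
  · exact fun hs => hunsplit s hs ⟨hi, hd⟩
  · exact hi.mono (fun x hx => ⟨hb'b hx.1, hx.2⟩)
  · exact hd.mono (fun x hx => ⟨hb'b hx.1, hx.2⟩)
end
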